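/- Let Λ be a finite alphabet, let X ⊆ Λ^ℕ be a subshift, and let θ be the standard partial action of 𝔽 on X. Given g ∈ 𝔽 with g ≠ 1, suppose x ∈ X_{g⁻¹} is a fixed point of θ_g, i.e. θ_g(x) = x. Then: (i) g admits a decomposition in reduced form as g = ν α^{±1} ν⁻¹ with α, ν ∈ 𝔽₊ and α a nonempty word; (ii) x = ν α^∞, so that α is a circuit, and x is the unique fixed point of θ_g. -/

import Mathlib

open scoped Classical

namespace SubshiftPaper

variable {Λ : Type}

/-- The left shift on infinite words. -/
def shiftMap (x : ℕ → Λ) : ℕ → Λ := fun n => x (n + 1)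

/-- Concatenation of a finite word with an infinite word. -/
def cat (α : List Λ) (y : ℕ → Λ) : ℕ → Λ := fun n => α.getD n (y (n - α.length))

/-- `α` is a prefix of the infinite word `x`. -/
def Pref (α : List Λ) (x : ℕ → Λ) : Prop := ∀ (i : ℕ) (h : i < α.length), x i = α[i]

/-- The tail of `x` after `n` letters. -/
def tail (x : ℕ → Λ) (n : ℕ) : ℕ → Λ := fun i => x (n + i)

/-- `α` occurs in `x` at position `n`. -/
def OccursAt (α : List Λ) (x : ℕ → Λ) (n : ℕ) : Prop :=
  ∀ (i : ℕ) (h : i < α.length), x (n + i) = α[i]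

/-- `α` occurs in `x` (as a contiguous block of letters). -/
def Occurs (α : List Λ) (x : ℕ → Λ) : Prop := ∃ n, OccursAt α x n

/-- `X` is a subshift: a nonempty closed shift-invariant subset. -/
def IsSubshift [TopologicalSpace Λ] (X : Set (ℕ → Λ)) : Prop :=
  X.Nonempty ∧ IsClosed X ∧ ∀ x ∈ X, shiftMap x ∈ X

/-- The set of infinite words avoiding all words in `F`. -/
def ForbidSpace (F : Set (List Λ)) : Set (ℕ → Λ) := {x | ∀ α ∈ F, ¬ Occurs α x}

/-- `X` is a subshift of finite type. -/
def IsSFT (X : Set (ℕ → Λ)) : Prop := ∃ F : Set (List Λ), F.Finite ∧ X = ForbidSpace F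

/-- The follower set of a finite word. -/
def follower (X : Set (ℕ → Λ)) (α : List Λ) : Set (ℕ → Λ) := {y | y ∈ X ∧ cat α y ∈ X}

/-- The cylinder of a finite word. -/
def cylinder (X : Set (ℕ → Λ)) (α : List Λ) : Set (ℕ → Λ) := {x | x ∈ X ∧ Pref α x}

/-- The language of `X`. -/
def Language (X : Set (ℕ → Λ)) : Set (List Λ) := {α | ∃ x ∈ X, Occurs α x}

/-- The embedding of finite words into the free group. -/
def wd (α : List Λ) : FreeGroup Λ := (α.map FreeGroup.of).prod

/-- Indicator function of a set of group elements. -/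
noncomputable def chi (s : Set (FreeGroup Λ)) : FreeGroup Λ → Bool :=
  fun g => if g ∈ s then true else false

/-- The set `ξ_x ⊆ 𝔽`. -/
def xiSet [DecidableEq Λ] (X : Set (ℕ → Λ)) (x : ℕ → Λ) : Set (FreeGroup Λ) :=
  {g | ∃ α β : List Λ, g = wd α * (wd β)⁻¹ ∧
        FreeGroup.norm g = α.length + β.length ∧
        Pref α x ∧ tail x α.length ∈ follower X α ∩ follower X β}

/-- `ξ_x` as an element of `2^𝔽`. -/
noncomputable def xiB [DecidableEq Λ] (X : Set (ℕ → Λ)) (x : ℕ → Λ) : FreeGroup Λ → Bool :=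
  chi (xiSet X x)

/-- The spectrum `Ω_X`: the closure of `{ξ_x : x ∈ X}` in `2^𝔽`. -/
noncomputable def Omega [DecidableEq Λ] (X : Set (ℕ → Λ)) : Set (FreeGroup Λ → Bool) :=
  closure ((fun x => xiB X x) '' X)

/-- Left translation of an element of `2^𝔽`. -/
def translate (g : FreeGroup Λ) (ξ : FreeGroup Λ → Bool) : FreeGroup Λ → Bool :=
  fun h => ξ (g⁻¹ * h)

/-- `x` is the stem of `ξ`: `ξ ∩ 𝔽₊` is exactly the set of prefixes of `x`. -/
def IsStem (ξ : FreeGroup Λ → Bool) (x : ℕ → Λ) : Prop :=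
  {g | ξ g = true} ∩ {g | ∃ α : List Λ, g = wd α} =
    {g | ∃ α : List Λ, g = wd α ∧ Pref α x}

/-- `x` is the stem of `ξ` at `g`: `ξ ∩ g𝔽₊ = {gα : α is a prefix of x}`. -/
def IsStemAt (ξ : FreeGroup Λ → Bool) (g : FreeGroup Λ) (x : ℕ → Λ) : Prop :=
  {h | ξ h = true} ∩ {h | ∃ α : List Λ, h = g * wd α} =
    {h | ∃ α : List Λ, h = g * wd α ∧ Pref α x}

/-- The orbit of `ξ` under the spectral partial action. -/
def Orbit (ξ : FreeGroup Λ → Bool) : Set (FreeGroup Λ → Bool) :=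
  {η | ∃ g : FreeGroup Λ, ξ g⁻¹ = true ∧ η = translate g ξ}

/-- Topological freeness of the spectral partial action. -/
noncomputable def TopFree [DecidableEq Λ] (X : Set (ℕ → Λ)) : Prop :=
  ∀ g : FreeGroup Λ, g ≠ 1 →
    ∀ U : Set (FreeGroup Λ → Bool), IsOpen U →
      (U ∩ Omega X ⊆ {ξ | ξ g⁻¹ = true ∧ translate g ξ = ξ}) → U ∩ Omega X = ∅

/-- The periodic infinite word `γ^∞`. -/
noncomputable def perInf [Nonempty Λ] (γ : List Λ) : ℕ → Λ :=
  fun n => γ.getD (n % γ.length) (Classical.arbitrary Λ)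

/-- `n`-fold concatenation of a finite word with itself. -/
def rep : ℕ → List Λ → List Λ
  | 0, _ => []
  | n + 1, γ => γ ++ rep n γ

/-- `γ` is a circuit relative to `X`. -/
noncomputable def IsCircuit [Nonempty Λ] (X : Set (ℕ → Λ)) (γ : List Λ) : Prop :=
  γ ≠ [] ∧ perInf γ ∈ X

/-- `y` is an exit for the circuit `γ`. -/
noncomputable def IsExit [Nonempty Λ] (X : Set (ℕ → Λ)) (γ : List Λ) (y : ℕ → Λ) : Prop :=
  y ≠ perInf γ ∧ cat γ y ∈ X

/-- `z` is a strong exit for the circuit `γ`. -/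
noncomputable def IsStrongExit [Nonempty Λ] (X : Set (ℕ → Λ)) (γ : List Λ) (z : ℕ → Λ) : Prop :=
  z ≠ perInf γ ∧ ∀ n : ℕ, cat (rep n γ) z ∈ X

/-- The sets `X_g` of the standard partial action. -/
def Xg [DecidableEq Λ] (X : Set (ℕ → Λ)) (g : FreeGroup Λ) : Set (ℕ → Λ) :=
  {x | ∃ α β : List Λ, g = wd α * (wd β)⁻¹ ∧
        FreeGroup.norm g = α.length + β.length ∧
        ∃ y ∈ follower X α ∩ follower X β, x = cat α y}

/-- `x` is a fixed point for `θ_g`. -/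
def IsThetaFixed [DecidableEq Λ] (X : Set (ℕ → Λ)) (g : FreeGroup Λ) (x : ℕ → Λ) : Prop :=
  ∃ α β : List Λ, g = wd α * (wd β)⁻¹ ∧
    FreeGroup.norm g = α.length + β.length ∧
    ∃ y ∈ follower X α ∩ follower X β, x = cat β y ∧ cat α y = x

/-- `x` may be collectively reached from the finite set `B`. -/
def CollReached (X : Set (ℕ → Λ)) (B : Finset (List Λ)) (x : ℕ → Λ) : Prop :=
  ∃ α γ : List Λ, Pref α x ∧ ∀ β ∈ B, cat (β ++ γ) (tail x α.length) ∈ X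

/-- `X` is collectively cofinal. -/
def CollCofinal (X : Set (ℕ → Λ)) : Prop :=
  ∀ B : Finset (List Λ), ↑B ⊆ Language X → (⋂ β ∈ B, follower X β).Nonempty →
    ∀ x ∈ X, CollReached X B x

/-- `X` is strongly cofinal. -/
def StrongCofinal (X : Set (ℕ → Λ)) : Prop :=
  ∀ β ∈ Language X, ∃ M : ℕ, ∀ x ∈ X, ∃ α γ : List Λ, Pref α x ∧
    cat (β ++ γ) (tail x α.length) ∈ X ∧ α.length + γ.length ≤ M

/-- The even shift. -/
def evenShift : Set (ℕ → Fin 2) :=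
  ForbidSpace {w | ∃ n : ℕ, w = 0 :: (List.replicate (2 * n + 1) 1 ++ [0])}

/-! If `θ_g` fixes `x`, write `g = αβ⁻¹` in reduced form and `x = βy = αy`. As `g ≠ 1`,
`α ≠ β`, so one of them, say `β`, is a proper prefix of the other, `α = βδ`; cancelling `β`
gives `δy = y`, so `y = δ^∞` and `g = βδβ⁻¹`. The reduced presentation of `g` is read off its
reduced word, so it is unique, and every fixed point comes from the same `α, β`, hence the same
`y`. -/

theorem cat_apply_of_lt (α : List Λ) (y : ℕ → Λ) {n : ℕ} (h : n < α.length) :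
    cat α y n = α[n] := by
  simp [cat, h]

theorem cat_apply_of_le (α : List Λ) (y : ℕ → Λ) {n : ℕ} (h : α.length ≤ n) :
    cat α y n = y (n - α.length) := by
  simp [cat, h]

theorem cat_injective (α : List Λ) : Function.Injective (cat α) := fun y z h => by
  funext n
  simpa [cat_apply_of_le] using congrFun h (α.length + n)

theorem cat_append (α δ : List Λ) (y : ℕ → Λ) : cat (α ++ δ) y = cat α (cat δ y) := by
  funext n
  simp only [cat, List.getD_eq_getElem?_getD, List.getElem?_append, List.length_append]
  split_ifs <;> grind

theorem isPrefix_of_cat_eq {α β : List Λ} {y : ℕ → Λ} (h : cat α y = cat β y)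
    (hle : β.length ≤ α.length) : β <+: α := by
  rw [List.prefix_iff_eq_take]
  refine List.ext_getElem (by simp [hle]) fun i hi _ => ?_
  have := congrFun h i
  rw [cat_apply_of_lt α y (by omega), cat_apply_of_lt β y hi] at this
  simp [this]

theorem eq_perInf_of_cat_eq_self [Nonempty Λ] {δ : List Λ} (hδ : δ ≠ []) {y : ℕ → Λ}
    (h : cat δ y = y) : y = perInf δ := by
  have hpos : 0 < δ.length := List.length_pos_iff.mpr hδ
  funext n
  induction n using Nat.strong_induction_on with
  | _ n ih =>
    rw [← congrFun h n, perInf]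
    rcases lt_or_ge n δ.length with hn | hn
    · simp [cat_apply_of_lt _ _ hn, Nat.mod_eq_of_lt hn, hn]
    · rw [cat_apply_of_le _ _ hn, ih _ (by omega), perInf, ← Nat.mod_eq_sub_mod hn]

theorem exists_eq_append_perInf_of_cat_eq [Nonempty Λ] {α β : List Λ} {y : ℕ → Λ}
    (hne : α ≠ β) (h : cat α y = cat β y) (hle : β.length ≤ α.length) :
    ∃ δ, δ ≠ [] ∧ α = β ++ δ ∧ y = perInf δ := by
  obtain ⟨δ, rfl⟩ := isPrefix_of_cat_eq h hle
  have hδ : δ ≠ [] := by rintro rfl; simp at hne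
  refine ⟨δ, hδ, rfl, eq_perInf_of_cat_eq_self hδ (cat_injective β ?_)⟩
  rwa [← cat_append]

theorem eq_of_cat_eq_cat [Nonempty Λ] {α β : List Λ} {y y' : ℕ → Λ} (hne : α ≠ β)
    (h : cat α y = cat β y) (h' : cat α y' = cat β y') : y = y' := by
  wlog hle : β.length ≤ α.length generalizing α β
  · exact this hne.symm h.symm h'.symm (by omega)
  obtain ⟨δ, -, hα, rfl⟩ := exists_eq_append_perInf_of_cat_eq hne h hle
  obtain ⟨δ', -, hα', rfl⟩ := exists_eq_append_perInf_of_cat_eq hne h' hle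
  rw [List.append_cancel_left (hα.symm.trans hα')]

theorem wd_eq_mk (α : List Λ) : wd α = FreeGroup.mk (α.map (·, true)) := by
  induction α with
  | nil => rfl
  | cons a l ih =>
    simp only [wd, List.map_cons, List.prod_cons] at ih ⊢
    rw [ih]
    exact FreeGroup.mul_mk

theorem wd_append (α β : List Λ) : wd (α ++ β) = wd α * wd β := by
  simp [wd]

theorem toWord_wd_mul_inv_wd [DecidableEq Λ] {α β : List Λ}
    (h : FreeGroup.norm (wd α * (wd β)⁻¹) = α.length + β.length) :
    (wd α * (wd β)⁻¹).toWord = α.map (·, true) ++ (β.map (·, false)).reverse := by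
  have hmk : wd α * (wd β)⁻¹ = FreeGroup.mk (α.map (·, true) ++ (β.map (·, false)).reverse) := by
    simp [wd_eq_mk, FreeGroup.inv_mk, FreeGroup.mul_mk, FreeGroup.invRev, Function.comp_def]
  rw [FreeGroup.norm, hmk, FreeGroup.toWord_mk] at h
  rw [hmk, FreeGroup.toWord_mk]
  exact FreeGroup.reduce.red.sublist.eq_of_length (by simpa using h)

theorem eq_of_reduced_presentations [DecidableEq Λ] {g : FreeGroup Λ} {α β α' β' : List Λ}
    (h : g = wd α * (wd β)⁻¹) (hn : FreeGroup.norm g = α.length + β.length)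
    (h' : g = wd α' * (wd β')⁻¹) (hn' : FreeGroup.norm g = α'.length + β'.length) :
    α = α' ∧ β = β' := by
  subst h
  have hw := toWord_wd_mul_inv_wd hn
  rw [h', toWord_wd_mul_inv_wd (h' ▸ hn')] at hw
  constructor
  · simpa [List.filter_append, List.filter_reverse, List.filter_map, Function.comp_def] using
      congrArg (fun w => (w.filter (·.2)).map Prod.fst) hw.symm
  · simpa [List.filter_append, List.filter_reverse, List.filter_map, Function.comp_def] using
      congrArg (fun w => ((w.filter (! ·.2)).map Prod.fst).reverse) hw.symm

theorem theta_fixed_points_general {Λ : Type} [Nonempty Λ] [DecidableEq Λ]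
    (X : Set (ℕ → Λ))
    (g : FreeGroup Λ) (hg : g ≠ 1) (x : ℕ → Λ) (hx : IsThetaFixed X g x) :
    (∃ ν α : List Λ, α ≠ [] ∧
        FreeGroup.norm g = 2 * ν.length + α.length ∧
        (g = wd ν * wd α * (wd ν)⁻¹ ∨ g = wd ν * (wd α)⁻¹ * (wd ν)⁻¹) ∧
        x = cat ν (perInf α) ∧ perInf α ∈ X) ∧
    (∀ x' : ℕ → Λ, IsThetaFixed X g x' → x' = x) := by
  obtain ⟨α, β, hgαβ, hnorm, y, ⟨hyα, -⟩, hxβ, hxα⟩ := hx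
  have hne : α ≠ β := by rintro rfl; exact hg (by rw [hgαβ, mul_inv_cancel])
  have hcat : cat α y = cat β y := hxα.trans hxβ
  refine ⟨?_, fun x' ⟨α', β', hg', hnorm', y', _, hx'β, hx'α⟩ => ?_⟩
  · rcases le_total β.length α.length with hle | hle
    · obtain ⟨δ, hδ, rfl, rfl⟩ := exists_eq_append_perInf_of_cat_eq hne hcat hle
      refine ⟨β, δ, hδ, by rw [hnorm, List.length_append]; ring, Or.inl ?_, hxβ, hyα.1⟩
      rw [hgαβ, wd_append]
    · obtain ⟨δ, hδ, rfl, rfl⟩ := exists_eq_append_perInf_of_cat_eq hne.symm hcat.symm hle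
      refine ⟨α, δ, hδ, by rw [hnorm, List.length_append]; ring, Or.inr ?_, hxα.symm, hyα.1⟩
      rw [hgαβ, wd_append, mul_inv_rev, mul_assoc]
  · obtain ⟨rfl, rfl⟩ := eq_of_reduced_presentations hg' hnorm' hgαβ hnorm
    rw [hx'β, hxβ, eq_of_cat_eq_cat hne (hx'α.trans hx'β) hcat]

/-- fixed points of the standard partial action. -/
theorem theta_fixed_points {Λ : Type} [Fintype Λ] [Nonempty Λ] [DecidableEq Λ]
    [TopologicalSpace Λ] [DiscreteTopology Λ]
    (X : Set (ℕ → Λ)) (hX : IsSubshift X)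
    (g : FreeGroup Λ) (hg : g ≠ 1) (x : ℕ → Λ) (hx : IsThetaFixed X g x) :
    (∃ ν α : List Λ, α ≠ [] ∧
        FreeGroup.norm g = 2 * ν.length + α.length ∧
        (g = wd ν * wd α * (wd ν)⁻¹ ∨ g = wd ν * (wd α)⁻¹ * (wd ν)⁻¹) ∧
        x = cat ν (perInf α) ∧ perInf α ∈ X) ∧
    (∀ x' : ℕ → Λ, IsThetaFixed X g x' → x' = x) :=
  theta_fixed_points_general X g hg x hx

end SubshiftPaper
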